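/- Let Ω ⊆ [n]×[n], p > 0, and for Z ∈ ℝ^{n×n} define (H_Ω Z)_{jk} = (1 − δ_{jk}/p)Z_{jk}, where δ_{jk} = 1 if (j,k) ∈ Ω and 0 otherwise. Then for all A, B, C, D ∈ ℝ^{n×r}: |⟨H_Ω(ACᵀ), BDᵀ⟩| ≤ ‖H_Ω(𝟏𝟏ᵀ)‖₂ · (‖A‖_{2,∞}‖B‖_F) · (‖C‖_F‖D‖_{2,∞}), where ⟨·,·⟩ denotes the entrywise (trace) inner product of matrices and 𝟏 is the all-ones vector in ℝⁿ. -/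

import Mathlib

/-!
With `H = H_Ω(𝟏𝟏ᵀ)` one has `H_Ω(Z) = H ⊙ Z`, and `⟨H ⊙ (ACᵀ), BDᵀ⟩ = tr(Xᵀ H Y)`, where
`X = faceSplit A B` and `Y = faceSplit C D` are the row-wise Kronecker (face-splitting) products,
whose columns are indexed by pairs `(s, t)`. Each diagonal entry of `Xᵀ H Y` is a bilinear form in
two columns, hence bounded by `‖H‖₂` times their norms; Cauchy–Schwarz over the columns gives
`|tr(Xᵀ H Y)| ≤ ‖H‖₂ ‖X‖_F ‖Y‖_F`. Finally `‖X‖_F² = ∑ᵢ ‖Aᵢ‖² ‖Bᵢ‖² ≤ ‖A‖²_{2,∞} ‖B‖²_F`, and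
symmetrically for `Y`.
-/

open Matrix MeasureTheory
open scoped Classical

noncomputable section

/-- Euclidean norm of a finitely-indexed real vector. -/
def vecNorm {n : Type*} [Fintype n] (v : n → ℝ) : ℝ :=
  Real.sqrt (∑ j, (v j) ^ 2)

/-- Spectral norm (ℓ₂ operator norm) of a real matrix. -/
def specNorm {m n : Type*} [Fintype m] [Fintype n] (A : Matrix m n ℝ) : ℝ :=
  sSup {c : ℝ | ∃ x : n → ℝ, vecNorm x ≤ 1 ∧ c = vecNorm (A.mulVec x)}

/-- Frobenius norm of a real matrix. -/
def frobNorm {m n : Type*} [Fintype m] [Fintype n] (A : Matrix m n ℝ) : ℝ :=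
  Real.sqrt (∑ i, ∑ j, (A i j) ^ 2)

/-- Entrywise maximum norm ‖·‖_∞ of a real matrix. -/
def maxNorm {m n : Type*} [Fintype m] [Fintype n] (A : Matrix m n ℝ) : ℝ :=
  ⨆ i, ⨆ j, |A i j|

/-- Two-to-infinity norm ‖·‖_{2,∞}: maximum Euclidean norm of a row. -/
def twoInfNorm {m n : Type*} [Fintype m] [Fintype n] (A : Matrix m n ℝ) : ℝ :=
  ⨆ i, vecNorm (fun j => A i j)

/-- The operator `H_Ω := I − p⁻¹ P_Ω`, i.e. `(H_Ω Z)_{jk} = (1 − δ_{jk}/p)·Z_{jk}`. -/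
def hProj {n : ℕ} (Ω : Set (Fin n × Fin n)) (p : ℝ) (Z : Matrix (Fin n) (Fin n) ℝ) :
    Matrix (Fin n) (Fin n) ℝ :=
  Matrix.of fun j k => (1 - (if (j, k) ∈ Ω then (1 : ℝ) else 0) / p) * Z j k

section VecNorm

variable {n : Type*} [Fintype n]

theorem vecNorm_eq_norm (v : n → ℝ) : vecNorm v = ‖WithLp.toLp 2 v‖ := by
  simp [vecNorm, EuclideanSpace.norm_eq]

theorem vecNorm_nonneg (v : n → ℝ) : 0 ≤ vecNorm v :=
  Real.sqrt_nonneg _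

theorem sq_vecNorm (v : n → ℝ) : vecNorm v ^ 2 = ∑ j, v j ^ 2 :=
  Real.sq_sqrt (by positivity)

theorem vecNorm_smul (c : ℝ) (v : n → ℝ) : vecNorm (c • v) = |c| * vecNorm v := by
  rw [vecNorm_eq_norm, vecNorm_eq_norm, WithLp.toLp_smul, norm_smul, Real.norm_eq_abs]

theorem vecNorm_eq_zero {v : n → ℝ} : vecNorm v = 0 ↔ v = 0 := by
  rw [vecNorm_eq_norm, norm_eq_zero, WithLp.toLp_eq_zero]

@[simp]
theorem vecNorm_zero : vecNorm (0 : n → ℝ) = 0 :=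
  vecNorm_eq_zero.mpr rfl

theorem abs_dotProduct_le_vecNorm_mul (v w : n → ℝ) : |v ⬝ᵥ w| ≤ vecNorm v * vecNorm w := by
  simpa [vecNorm_eq_norm, EuclideanSpace.inner_eq_star_dotProduct, dotProduct_comm]
    using abs_real_inner_le_norm (WithLp.toLp 2 v) (WithLp.toLp 2 w)

end VecNorm

section MatrixNorms

variable {m n k : Type*} [Fintype m] [Fintype n] [Fintype k]

theorem frobNorm_nonneg (A : Matrix m n ℝ) : 0 ≤ frobNorm A :=
  Real.sqrt_nonneg _

theorem sq_frobNorm (A : Matrix m n ℝ) : frobNorm A ^ 2 = ∑ i, vecNorm (A i) ^ 2 := by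
  simp only [frobNorm, sq_vecNorm]
  exact Real.sq_sqrt (by positivity)

theorem frobNorm_eq_vecNorm_vecNorm_transpose (A : Matrix m n ℝ) :
    frobNorm A = vecNorm fun j => vecNorm (Aᵀ j) := by
  simp only [frobNorm, vecNorm, Real.sq_sqrt (Finset.sum_nonneg fun _ _ => sq_nonneg _)]
  rw [Finset.sum_comm]
  rfl

theorem vecNorm_row_le_twoInfNorm (A : Matrix m n ℝ) (i : m) : vecNorm (A i) ≤ twoInfNorm A :=
  le_ciSup (f := fun i => vecNorm (A i)) (Set.finite_range _).bddAbove i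

theorem twoInfNorm_nonneg (A : Matrix m n ℝ) : 0 ≤ twoInfNorm A :=
  Real.iSup_nonneg fun _ => vecNorm_nonneg _

theorem vecNorm_mulVec_le_frobNorm (H : Matrix m n ℝ) {x : n → ℝ} (hx : vecNorm x ≤ 1) :
    vecNorm (H *ᵥ x) ≤ frobNorm H := by
  refine Real.sqrt_le_sqrt (Finset.sum_le_sum fun i _ => ?_)
  have h : |H i ⬝ᵥ x| ≤ |vecNorm (H i)| :=
    ((abs_dotProduct_le_vecNorm_mul _ _).trans
      (mul_le_of_le_one_right (vecNorm_nonneg _) hx)).trans (le_abs_self _)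
  rw [← sq_vecNorm]
  exact sq_le_sq.mpr h

theorem bddAbove_specNorm_set (H : Matrix m n ℝ) :
    BddAbove {c : ℝ | ∃ x : n → ℝ, vecNorm x ≤ 1 ∧ c = vecNorm (H *ᵥ x)} :=
  ⟨frobNorm H, by rintro c ⟨x, hx, rfl⟩; exact vecNorm_mulVec_le_frobNorm H hx⟩

theorem specNorm_nonneg (H : Matrix m n ℝ) : 0 ≤ specNorm H :=
  le_csSup (bddAbove_specNorm_set H) ⟨0, by simp, by simp⟩

theorem vecNorm_mulVec_le (H : Matrix m n ℝ) (x : n → ℝ) :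
    vecNorm (H *ᵥ x) ≤ specNorm H * vecNorm x := by
  obtain hx | hx := (vecNorm_nonneg x).eq_or_lt
  · rw [← hx, vecNorm_eq_zero.mp hx.symm, mulVec_zero, mul_zero, vecNorm_zero]
  · have hunit : vecNorm ((vecNorm x)⁻¹ • x) ≤ 1 := by
      rw [vecNorm_smul, abs_inv, abs_of_pos hx, inv_mul_cancel₀ hx.ne']
    have h := le_csSup (bddAbove_specNorm_set H) ⟨_, hunit, rfl⟩
    rw [mulVec_smul, vecNorm_smul, abs_inv, abs_of_pos hx, inv_mul_le_iff₀ hx] at h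
    rwa [mul_comm]

theorem abs_dotProduct_mulVec_le (H : Matrix m n ℝ) (x : m → ℝ) (y : n → ℝ) :
    |x ⬝ᵥ H *ᵥ y| ≤ specNorm H * (vecNorm x * vecNorm y) :=
  calc |x ⬝ᵥ H *ᵥ y| ≤ vecNorm x * vecNorm (H *ᵥ y) := abs_dotProduct_le_vecNorm_mul _ _
    _ ≤ vecNorm x * (specNorm H * vecNorm y) :=
      mul_le_mul_of_nonneg_left (vecNorm_mulVec_le H y) (vecNorm_nonneg x)
    _ = specNorm H * (vecNorm x * vecNorm y) := by ring

theorem trace_transpose_mul_mul_eq_sum (H : Matrix m n ℝ) (X : Matrix m k ℝ)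
    (Y : Matrix n k ℝ) : (Xᵀ * H * Y).trace = ∑ s, Xᵀ s ⬝ᵥ H *ᵥ Yᵀ s := by
  simp only [trace, diag_apply, mul_apply, dotProduct, mulVec, transpose_apply, Finset.sum_mul,
    Finset.mul_sum]
  refine Finset.sum_congr rfl fun s _ => ?_
  rw [Finset.sum_comm]
  simp only [mul_assoc]

theorem abs_trace_transpose_mul_mul_le (H : Matrix m n ℝ) (X : Matrix m k ℝ)
    (Y : Matrix n k ℝ) : |(Xᵀ * H * Y).trace| ≤ specNorm H * (frobNorm X * frobNorm Y) := by
  rw [trace_transpose_mul_mul_eq_sum, frobNorm_eq_vecNorm_vecNorm_transpose X,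
    frobNorm_eq_vecNorm_vecNorm_transpose Y]
  calc |∑ s, Xᵀ s ⬝ᵥ H *ᵥ Yᵀ s| ≤ ∑ s, |Xᵀ s ⬝ᵥ H *ᵥ Yᵀ s| := Finset.abs_sum_le_sum_abs _ _
    _ ≤ ∑ s, specNorm H * (vecNorm (Xᵀ s) * vecNorm (Yᵀ s)) :=
      Finset.sum_le_sum fun s _ => abs_dotProduct_mulVec_le H _ _
    _ = specNorm H * ((fun s => vecNorm (Xᵀ s)) ⬝ᵥ fun s => vecNorm (Yᵀ s)) :=
      (Finset.mul_sum _ _ _).symm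
    _ ≤ _ := mul_le_mul_of_nonneg_left
      ((le_abs_self _).trans (abs_dotProduct_le_vecNorm_mul _ _)) (specNorm_nonneg H)

end MatrixNorms

section FaceSplit

variable {m n k l : Type*}

def faceSplit {R : Type*} [Mul R] (A : Matrix m k R) (B : Matrix m l R) : Matrix m (k × l) R :=
  of fun i st => A i st.1 * B i st.2

theorem sum_hadamard_mul_eq_trace_faceSplit [Fintype m] [Fintype n] [Fintype k] [Fintype l]
    {R : Type*} [CommSemiring R] (H : Matrix m n R) (A : Matrix m k R) (B : Matrix m l R)
    (C : Matrix n k R) (D : Matrix n l R) :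
    ∑ i, ∑ j, (H ⊙ (A * Cᵀ)) i j * (B * Dᵀ) i j =
      ((faceSplit A B)ᵀ * H * faceSplit C D).trace := by
  have entry : ∀ i j, (H ⊙ (A * Cᵀ)) i j * (B * Dᵀ) i j =
      ∑ st, faceSplit A B i st * H i j * faceSplit C D j st := by
    intro i j
    rw [hadamard_apply, mul_apply, mul_apply, mul_assoc, Finset.sum_mul_sum, Fintype.sum_prod_type]
    simp only [Finset.mul_sum]
    exact Finset.sum_congr rfl fun s _ => Finset.sum_congr rfl fun t _ => by
      simp only [faceSplit, of_apply, transpose_apply]; ring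
  simp only [entry]
  rw [Finset.sum_comm_cycle]
  simp only [trace, diag_apply, mul_apply, transpose_apply, Finset.sum_mul]
  exact Finset.sum_congr rfl fun st _ => Finset.sum_comm

variable [Fintype m] [Fintype k] [Fintype l]

theorem sq_frobNorm_faceSplit (A : Matrix m k ℝ) (B : Matrix m l ℝ) :
    frobNorm (faceSplit A B) ^ 2 = ∑ i, vecNorm (A i) ^ 2 * vecNorm (B i) ^ 2 := by
  simp only [sq_frobNorm, sq_vecNorm, faceSplit, of_apply, Fintype.sum_prod_type, mul_pow,
    Finset.sum_mul_sum]

theorem frobNorm_faceSplit_comm (A : Matrix m k ℝ) (B : Matrix m l ℝ) :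
    frobNorm (faceSplit A B) = frobNorm (faceSplit B A) := by
  rw [← sq_eq_sq₀ (frobNorm_nonneg _) (frobNorm_nonneg _), sq_frobNorm_faceSplit,
    sq_frobNorm_faceSplit]
  simp only [mul_comm]

theorem frobNorm_faceSplit_le_twoInfNorm_mul_frobNorm (A : Matrix m k ℝ) (B : Matrix m l ℝ) :
    frobNorm (faceSplit A B) ≤ twoInfNorm A * frobNorm B := by
  rw [← sq_le_sq₀ (frobNorm_nonneg _) (mul_nonneg (twoInfNorm_nonneg A) (frobNorm_nonneg B)),
    sq_frobNorm_faceSplit, mul_pow, sq_frobNorm, Finset.mul_sum]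
  gcongr with i
  · exact vecNorm_nonneg _
  · exact vecNorm_row_le_twoInfNorm A i

theorem frobNorm_faceSplit_le_frobNorm_mul_twoInfNorm (A : Matrix m k ℝ) (B : Matrix m l ℝ) :
    frobNorm (faceSplit A B) ≤ frobNorm A * twoInfNorm B := by
  rw [frobNorm_faceSplit_comm, mul_comm]
  exact frobNorm_faceSplit_le_twoInfNorm_mul_frobNorm B A

end FaceSplit

theorem hProj_eq_hadamard {n : ℕ} (Ω : Set (Fin n × Fin n)) (p : ℝ)
    (Z : Matrix (Fin n) (Fin n) ℝ) : hProj Ω p Z = hProj Ω p (of fun _ _ => 1) ⊙ Z := by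
  ext j k
  simp [hProj]

theorem stmt13_general {n r : ℕ} (Ω : Set (Fin n × Fin n)) (p : ℝ)
    (A B C D : Matrix (Fin n) (Fin r) ℝ) :
    |∑ i : Fin n, ∑ j : Fin n, hProj Ω p (A * Cᵀ) i j * (B * Dᵀ) i j| ≤
      specNorm (hProj Ω p (Matrix.of fun _ _ => (1 : ℝ))) *
        (twoInfNorm A * frobNorm B) * (frobNorm C * twoInfNorm D) := by
  rw [hProj_eq_hadamard Ω p (A * Cᵀ), sum_hadamard_mul_eq_trace_faceSplit, mul_assoc]
  refine (abs_trace_transpose_mul_mul_le _ _ _).trans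
    (mul_le_mul_of_nonneg_left ?_ (specNorm_nonneg _))
  exact mul_le_mul (frobNorm_faceSplit_le_twoInfNorm_mul_frobNorm A B)
    (frobNorm_faceSplit_le_frobNorm_mul_twoInfNorm C D) (frobNorm_nonneg _)
    (mul_nonneg (twoInfNorm_nonneg A) (frobNorm_nonneg B))

/-- Deterministic bound:
`|⟨H_Ω(ACᵀ), BDᵀ⟩| ≤ ‖H_Ω(𝟏𝟏ᵀ)‖₂ · (‖A‖_{2,∞}‖B‖_F) · (‖C‖_F‖D‖_{2,∞})`. -/
theorem stmt13 {n r : ℕ} (Ω : Set (Fin n × Fin n)) (p : ℝ) (hp : 0 < p)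
    (A B C D : Matrix (Fin n) (Fin r) ℝ) :
    |∑ i : Fin n, ∑ j : Fin n, hProj Ω p (A * Cᵀ) i j * (B * Dᵀ) i j| ≤
      specNorm (hProj Ω p (Matrix.of fun _ _ => (1 : ℝ))) *
        (twoInfNorm A * frobNorm B) * (frobNorm C * twoInfNorm D) :=
  stmt13_general Ω p A B C D
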